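/- arXiv:1112.4572 — 2 statements merged into one kernel-verified Lean document; each statement's English description precedes it below -/
import Mathlib

section
/- For independent bidders with finite type spaces and a single item, a reduced form π is feasible if and only if for all x ≥ 0, the virtual-threshold sets S^{(i)}_x = {A ∈ T_i : \hat{π}_i(A) > x} (where \hat{π}_i(A) = Pr[π_i(t_i) ≤ π_i(A)]·π_i(A)) satisfy Σ_i Σ_{A ∈ S^{(i)}_x} π_i(A)·Pr[t_i = A] ≤ 1 − Π_i (1 − Pr[t_i ∈ S^{(i)}_x]). -/
/-!
Necessity: with independent types, the expected number of items a feasible rule gives to bidders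
whose type lies in `S i` is at most the probability that some bidder's type lies in `S i`.

Sufficiency goes through Border's theorem for all products of sets. Among the products `S`
maximizing the violation `∑ π μ (S) - (1 - ∏ (1 - μ (S i)))` take one of maximal size. Adding
or removing a type `A` of bidder `i` changes the violation by `(π i A - c_i) * μ i A`, where
`c_i = ∏ j ≠ i, (1 - μ (S j))`; so `S i` contains every type with `π i A ≥ c_i` and no type of
positive probability with `π i A < c_i`. The virtual-threshold sets at level
`c = ∏ j, (1 - μ (S j))` are then contained in `S` and miss only types of zero weight `π μ`, so
they are at least as violated as `S`.

Border's theorem follows by separation. Were the weighted reduced form `μ π` outside the compact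
convex set of weighted reduced forms of allocation rules, some `y` would satisfy
`∑ y π μ > E[max_i (y i (t i))⁺]`, the best value an allocation rule attains against `y`.
Slicing `y⁺` into layers `t • 1_S` reduces the reverse inequality to Border inequalities. Types
of probability zero play no role in this argument and are dealt with at the end.
-/

open Finset
open scoped NNReal

theorem Finset.sup_eq_sup_min_add_sup_tsub {α κ : Type*} [AddCommMonoid α] [LinearOrder α]
    [CanonicallyOrderedAdd α] [Sub α] [OrderedSub α] [OrderBot α]
    (s : Finset κ) (f : κ → α) (t : α) :
    s.sup f = (s.sup fun k => min (f k) t) + s.sup fun k => f k - t := by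
  have hmono : Monotone fun x : α => x - t := fun x y h => tsub_le_tsub_right h t
  have hsub : s.sup (fun k => f k - t) = s.sup f - t :=
    (apply_sup_eq_sup_comp (fun x : α => x - t) (fun x y => hmono.map_max)
      (by simp only [bot_eq_zero', zero_tsub])).symm
  rw [hsub, ← sup_inf_distrib_right]
  exact (add_comm _ _ |>.trans tsub_add_min).symm

theorem LinearMap.apply_eq_sum_sum_single {ι R M : Type*} [Fintype ι] [DecidableEq ι]
    {T : ι → Type*} [∀ i, Fintype (T i)] [∀ i, DecidableEq (T i)] [Semiring R]
    [AddCommMonoid M] [Module R M] (f : (∀ i, T i → R) →ₗ[R] M) (z : ∀ i, T i → R) :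
    f z = ∑ i, ∑ A, z i A • f (Pi.single i (Pi.single A 1)) := by
  have hz : z = ∑ i, ∑ A, z i A • (Pi.single i (Pi.single A 1) : ∀ i, T i → R) := by
    ext j B
    simp only [Finset.sum_apply, Pi.smul_apply]
    rw [sum_eq_single j (fun i _ hij => by simp [Pi.single_eq_of_ne' hij]) (by simp)]
    simp [Pi.single_apply]
  conv_lhs => rw [hz]
  simp only [map_sum, map_smul]

namespace Border

section Bidder

variable {α : Type*} [Fintype α] [DecidableEq α] {μ π : α → ℝ}

theorem one_sub_sum_eq_sum_compl (hμ1 : ∑ A, μ A = 1) (s : Finset α) :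
    1 - ∑ B ∈ s, μ B = ∑ B ∈ sᶜ, μ B := by
  rw [← hμ1, ← sum_compl_add_sum s]; ring

theorem one_sub_sum_nonneg (hμ0 : ∀ A, 0 ≤ μ A) (hμ1 : ∑ A, μ A = 1) (s : Finset α) :
    0 ≤ 1 - ∑ B ∈ s, μ B :=
  (one_sub_sum_eq_sum_compl hμ1 s).symm ▸ sum_nonneg fun B _ => hμ0 B

noncomputable def virtualValue (μ π : α → ℝ) (A : α) : ℝ :=
  (∑ B ∈ univ.filter (fun B => π B ≤ π A), μ B) * π A

theorem virtualValue_le_of_lt (hμ0 : ∀ A, 0 ≤ μ A) (hμ1 : ∑ A, μ A = 1) {s : Finset α} {d : ℝ}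
    (hs : ∀ B ∈ s, 0 < μ B → d ≤ π B) {A : α} (hπA : 0 ≤ π A) (hAd : π A < d) :
    virtualValue μ π A ≤ (1 - ∑ B ∈ s, μ B) * d := by
  set lower := univ.filter (fun B => π B ≤ π A)
  have hnull : ∑ B ∈ lower ∩ s, μ B = 0 := sum_eq_zero fun B hB => by
    obtain ⟨hBA, hBs⟩ := mem_inter.1 hB
    by_contra hμB
    linarith [hs B hBs ((hμ0 B).lt_of_ne' hμB), (mem_filter.1 hBA).2]
  have hunion : ∑ B ∈ lower ∪ s, μ B ≤ 1 :=
    hμ1 ▸ sum_le_univ_sum_of_nonneg fun B => hμ0 B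
  have hlower : ∑ B ∈ lower, μ B ≤ 1 - ∑ B ∈ s, μ B := by
    linarith [sum_union_inter (s₁ := lower) (s₂ := s) (f := μ)]
  calc virtualValue μ π A ≤ (1 - ∑ B ∈ s, μ B) * π A := mul_le_mul_of_nonneg_right hlower hπA
    _ ≤ (1 - ∑ B ∈ s, μ B) * d :=
      mul_le_mul_of_nonneg_left hAd.le (one_sub_sum_nonneg hμ0 hμ1 s)

theorem lt_virtualValue_of_le (hμ0 : ∀ A, 0 ≤ μ A) (hμ1 : ∑ A, μ A = 1)
    {s : Finset α} {d : ℝ} (hs : ∀ B ∉ s, π B < d) {A : α} (hA : A ∈ s) (hdA : d ≤ π A)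
    (hμA : 0 < μ A) (hπA : 0 < π A) :
    (1 - ∑ B ∈ s, μ B) * d < virtualValue μ π A := by
  have hlower : 1 - ∑ B ∈ s, μ B + μ A ≤ ∑ B ∈ univ.filter (fun B => π B ≤ π A), μ B := by
    rw [one_sub_sum_eq_sum_compl hμ1, add_comm, ← sum_insert (by simpa using hA)]
    refine sum_le_sum_of_subset_of_nonneg (fun B hB => ?_) fun B _ _ => hμ0 B
    rcases mem_insert.1 hB with rfl | hB
    · simp
    · simpa using (hs B (by simpa using hB)).le.trans hdA
  calc (1 - ∑ B ∈ s, μ B) * d ≤ (1 - ∑ B ∈ s, μ B) * π A :=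
      mul_le_mul_of_nonneg_left hdA (one_sub_sum_nonneg hμ0 hμ1 s)
    _ < (1 - ∑ B ∈ s, μ B + μ A) * π A := by nlinarith
    _ ≤ virtualValue μ π A := mul_le_mul_of_nonneg_right hlower hπA.le

end Bidder

variable {ι : Type*} [Fintype ι] {T : ι → Type*} {μ : ∀ i, T i → ℝ}

def IsAllocationRule (φ : (∀ i, T i) → ι → ℝ) : Prop :=
  (∀ P i, 0 ≤ φ P i) ∧ ∀ P, ∑ i, φ P i ≤ 1

theorem convex_setOf_isAllocationRule :
    Convex ℝ {φ : (∀ i, T i) → ι → ℝ | IsAllocationRule φ} := by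
  intro φ hφ ψ hψ a b ha hb hab
  refine ⟨fun P i => ?_, fun P => ?_⟩
  · simpa using add_nonneg (mul_nonneg ha (hφ.1 P i)) (mul_nonneg hb (hψ.1 P i))
  · simp only [Pi.add_apply, Pi.smul_apply, smul_eq_mul, sum_add_distrib, ← mul_sum]
    nlinarith [hφ.2 P, hψ.2 P]

def BorderIneq (μ π : ∀ i, T i → ℝ) (S : ∀ i, Finset (T i)) : Prop :=
  ∑ i, ∑ A ∈ S i, π i A * μ i A ≤ 1 - ∏ i, (1 - ∑ A ∈ S i, μ i A)

def borderSlack (μ π : ∀ i, T i → ℝ) (S : ∀ i, Finset (T i)) : ℝ :=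
  ∑ i, ∑ A ∈ S i, π i A * μ i A - (1 - ∏ i, (1 - ∑ A ∈ S i, μ i A))

theorem borderIneq_iff_borderSlack_nonpos (μ π : ∀ i, T i → ℝ) (S : ∀ i, Finset (T i)) :
    BorderIneq μ π S ↔ borderSlack μ π S ≤ 0 :=
  sub_nonpos.symm

variable [DecidableEq ι]

def missProbExcept (μ : ∀ i, T i → ℝ) (S : ∀ i, Finset (T i)) (i : ι) : ℝ :=
  ∏ j ∈ {i}ᶜ, (1 - ∑ A ∈ S j, μ j A)

theorem borderSlack_update (π : ∀ i, T i → ℝ) (S : ∀ i, Finset (T i)) (i : ι)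
    (t : Finset (T i)) :
    borderSlack μ π (Function.update S i t) = borderSlack μ π S
      + ∑ A ∈ t, (π i A - missProbExcept μ S i) * μ i A
      - ∑ A ∈ S i, (π i A - missProbExcept μ S i) * μ i A := by
  have hother : ∀ j ∈ ({i}ᶜ : Finset ι), Function.update S i t j = S j := fun j hj =>
    Function.update_of_ne (β := fun j => Finset (T j)) (by simpa using hj) t S
  simp only [borderSlack, missProbExcept, Fintype.sum_eq_add_sum_compl i,
    Fintype.prod_eq_mul_prod_compl i, Function.update_self, sum_congr rfl fun j hj =>
    congrArg (fun s => ∑ A ∈ s, π j A * μ j A) (hother j hj), prod_congr rfl fun j hj =>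
    congrArg (fun s => 1 - ∑ A ∈ s, μ j A) (hother j hj), sub_mul, sum_sub_distrib, ← mul_sum]
  ring

variable [∀ i, Fintype (T i)]

theorem sum_prod_eq_one (hμ1 : ∀ i, ∑ A, μ i A = 1) : ∑ P : ∀ i, T i, ∏ i, μ i (P i) = 1 := by
  simp [← Fintype.prod_sum, hμ1]

noncomputable def expectedMax (μ : ∀ i, T i → ℝ) (y : ∀ i, T i → ℝ≥0) : ℝ :=
  ∑ P : ∀ i, T i, (∏ i, μ i (P i)) * (univ.sup fun i => y i (P i) : ℝ≥0)

theorem expectedMax_eq_add (μ : ∀ i, T i → ℝ) (y : ∀ i, T i → ℝ≥0) (t : ℝ≥0) :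
    expectedMax μ y
      = expectedMax μ (fun i A => min (y i A) t) + expectedMax μ (fun i A => y i A - t) := by
  simp only [expectedMax, ← sum_add_distrib, ← mul_add, ← NNReal.coe_add,
    ← sup_eq_sup_min_add_sup_tsub]

theorem isCompact_setOf_isAllocationRule :
    IsCompact {φ : (∀ i, T i) → ι → ℝ | IsAllocationRule φ} := by
  have hclosed : IsClosed {φ : (∀ i, T i) → ι → ℝ | IsAllocationRule φ} := by
    simp only [IsAllocationRule, Set.ofPred_and, Set.ofPred_forall]
    exact (isClosed_iInter fun P => isClosed_iInter fun i =>
      isClosed_le continuous_const (by fun_prop)).inter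
      (isClosed_iInter fun P => isClosed_le (by fun_prop) continuous_const)
  refine Metric.isCompact_of_isClosed_isBounded hclosed
    ((Metric.isBounded_Icc 0 1).subset fun φ hφ => ⟨fun P i => hφ.1 P i, fun P i => ?_⟩)
  exact (single_le_sum (fun j _ => hφ.1 P j) (mem_univ i)).trans (hφ.2 P)

variable [∀ i, DecidableEq (T i)]

theorem sum_prod_filter_exists_mem (hμ1 : ∀ i, ∑ A, μ i A = 1) (S : ∀ i, Finset (T i)) :
    ∑ P ∈ univ.filter (fun P : ∀ i, T i => ∃ i, P i ∈ S i), ∏ i, μ i (P i)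
      = 1 - ∏ i, (1 - ∑ A ∈ S i, μ i A) := by
  have hmiss : univ.filter (fun P : ∀ i, T i => ¬∃ i, P i ∈ S i)
      = Fintype.piFinset fun i => (S i)ᶜ := by
    ext P; simp
  rw [prod_congr rfl fun i _ => one_sub_sum_eq_sum_compl (hμ1 i) (S i), prod_univ_sum, ← hmiss,
    eq_sub_iff_add_eq, sum_filter_add_sum_filter_not, sum_prod_eq_one hμ1]

def interimAlloc (μ : ∀ i, T i → ℝ) (φ : (∀ i, T i) → ι → ℝ) (i : ι) (A : T i) : ℝ :=
  ∑ P : ∀ j, T j, if P i = A then (∏ j ∈ univ.erase i, μ j (P j)) * φ P i else 0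

def IsFeasible (μ π : ∀ i, T i → ℝ) : Prop :=
  ∃ φ, IsAllocationRule φ ∧ ∀ i A, interimAlloc μ φ i A = π i A

theorem sum_mul_interimAlloc (y : ∀ i, T i → ℝ) (φ : (∀ i, T i) → ι → ℝ) :
    ∑ i, ∑ A, y i A * μ i A * interimAlloc μ φ i A
      = ∑ P : ∀ i, T i, (∏ i, μ i (P i)) * ∑ i, y i (P i) * φ P i := by
  simp only [interimAlloc, mul_sum, mul_ite, mul_zero]
  rw [sum_comm]
  refine sum_congr rfl fun i _ => ?_
  rw [sum_comm]
  refine sum_congr rfl fun P _ => ?_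
  rw [sum_ite_eq, if_pos (mem_univ _), ← mul_prod_erase univ (fun j => μ j (P j)) (mem_univ i)]
  ring

theorem IsFeasible.borderIneq (hμ0 : ∀ i A, 0 ≤ μ i A) (hμ1 : ∀ i, ∑ A, μ i A = 1)
    {π : ∀ i, T i → ℝ} (h : IsFeasible μ π) (S : ∀ i, Finset (T i)) : BorderIneq μ π S := by
  obtain ⟨φ, hφ, hπ⟩ := h
  have hlhs : ∑ i, ∑ A ∈ S i, π i A * μ i A
      = ∑ P : ∀ i, T i, (∏ i, μ i (P i)) * ∑ i, (if P i ∈ S i then 1 else 0) * φ P i := by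
    rw [← sum_mul_interimAlloc (fun i A => if A ∈ S i then 1 else 0)]
    refine sum_congr rfl fun i _ => ?_
    simp only [ite_mul, one_mul, zero_mul, sum_ite_mem, univ_inter, hπ]
    exact sum_congr rfl fun A _ => mul_comm _ _
  rw [BorderIneq, hlhs, ← sum_prod_filter_exists_mem hμ1, sum_filter]
  refine sum_le_sum fun P _ => ?_
  split_ifs with h
  · refine mul_le_of_le_one_right (prod_nonneg fun i _ => hμ0 i (P i)) ?_
    refine (sum_le_sum fun i _ => ?_).trans (hφ.2 P)
    split_ifs <;> simp [hφ.1 P i]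
  · simp_all

theorem exists_extremal_borderSlack (hμ0 : ∀ i A, 0 ≤ μ i A) (π : ∀ i, T i → ℝ) :
    ∃ S : ∀ i, Finset (T i), (∀ S', borderSlack μ π S' ≤ borderSlack μ π S) ∧
      (∀ i, ∀ A ∉ S i, π i A < missProbExcept μ S i) ∧
      (∀ i, ∀ A ∈ S i, 0 < μ i A → missProbExcept μ S i ≤ π i A) := by
  -- ties are broken by total size, so that no type can be added without decreasing the slack
  obtain ⟨S, -, hS⟩ := exists_max_image univ
    (fun S : ∀ i, Finset (T i) => toLex (borderSlack μ π S, ∑ i, #(S i))) univ_nonempty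
  have hmax : ∀ S', borderSlack μ π S' < borderSlack μ π S ∨
      borderSlack μ π S' = borderSlack μ π S ∧ ∑ i, #(S' i) ≤ ∑ i, #(S i) := fun S' =>
    Prod.Lex.toLex_le_toLex.1 (hS S' (mem_univ _))
  refine ⟨S, fun S' => (hmax S').elim le_of_lt fun h => h.1.le, fun i A hA => ?_,
    fun i A hA hμA => ?_⟩
  · have hcard : ∑ j, #(Function.update S i (insert A (S i)) j) = ∑ j, #(S j) + 1 := by
      rw [sum_congr rfl fun j _ => Function.apply_update (fun j (s : Finset (T j)) => #s) S i _ j,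
        sum_update_of_mem (mem_univ i), card_insert_of_notMem hA,
        sum_eq_add_sum_sdiff_singleton_of_mem (mem_univ i) (fun j => #(S j))]
      ring
    have h := hmax (Function.update S i (insert A (S i)))
    rw [borderSlack_update, sum_insert hA, hcard] at h
    by_contra hle
    have : 0 ≤ (π i A - missProbExcept μ S i) * μ i A :=
      mul_nonneg (by linarith) (hμ0 i A)
    rcases h with h | ⟨-, h⟩ <;> linarith
  · have h := hmax (Function.update S i ((S i).erase A))
    rw [borderSlack_update, ← sum_erase_add _ _ hA] at h
    by_contra hlt
    have : (π i A - missProbExcept μ S i) * μ i A < 0 :=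
      mul_neg_of_neg_of_pos (by linarith) hμA
    rcases h with h | ⟨h, -⟩ <;> linarith

noncomputable def virtualThresholdSet (μ π : ∀ i, T i → ℝ) (x : ℝ) (i : ι) : Finset (T i) :=
  univ.filter fun A => x < virtualValue (μ i) (π i) A

theorem borderIneq_of_forall_virtualThresholdSet (hμ0 : ∀ i A, 0 ≤ μ i A)
    (hμ1 : ∀ i, ∑ A, μ i A = 1) {π : ∀ i, T i → ℝ} (hπ0 : ∀ i A, 0 ≤ π i A)
    (hv : ∀ x, 0 ≤ x → BorderIneq μ π (virtualThresholdSet μ π x)) (S : ∀ i, Finset (T i)) :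
    BorderIneq μ π S := by
  obtain ⟨S₀, hmax, hout, hin⟩ := exists_extremal_borderSlack hμ0 π
  set c := ∏ i, (1 - ∑ A ∈ S₀ i, μ i A)
  set V := virtualThresholdSet μ π c
  have hc : ∀ i, c = (1 - ∑ A ∈ S₀ i, μ i A) * missProbExcept μ S₀ i := fun i =>
    Fintype.prod_eq_mul_prod_compl i _
  have hsub : ∀ i, V i ⊆ S₀ i := fun i A hA => by
    by_contra hA'
    refine (mem_filter.1 hA).2.not_ge ?_
    rw [hc i]
    exact virtualValue_le_of_lt (hμ0 i) (hμ1 i) (hin i) (hπ0 i A) (hout i A hA')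
  have hnull : ∀ i, ∀ A ∈ S₀ i, A ∉ V i → π i A * μ i A = 0 := fun i A hA hAV => by
    by_contra h
    have hπA := (hπ0 i A).lt_of_ne' (left_ne_zero_of_mul h)
    have hμA := (hμ0 i A).lt_of_ne' (right_ne_zero_of_mul h)
    refine hAV (mem_filter.2 ⟨mem_univ _, ?_⟩)
    rw [hc i]
    exact lt_virtualValue_of_le (hμ0 i) (hμ1 i) (hout i) hA (hin i A hA hμA) hμA hπA
  have hslack : borderSlack μ π S₀ ≤ borderSlack μ π V := by
    have hprod : c ≤ ∏ i, (1 - ∑ A ∈ V i, μ i A) :=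
      prod_le_prod (fun i _ => one_sub_sum_nonneg (hμ0 i) (hμ1 i) _) fun i _ =>
        sub_le_sub_left (sum_le_sum_of_subset_of_nonneg (hsub i) fun A _ _ => hμ0 i A) 1
    simp only [borderSlack, sum_subset (hsub _) (hnull _)]
    linarith
  have hV := hv c (prod_nonneg fun i _ => one_sub_sum_nonneg (hμ0 i) (hμ1 i) _)
  rw [borderIneq_iff_borderSlack_nonpos] at hV ⊢
  exact (hmax S).trans (hslack.trans hV)

theorem sum_mul_le_expectedMax_ite (hμ1 : ∀ i, ∑ A, μ i A = 1)
    {π : ∀ i, T i → ℝ} {S : ∀ i, Finset (T i)} (hS : BorderIneq μ π S) (t : ℝ≥0) :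
    ∑ i, ∑ A, ((if A ∈ S i then t else 0 : ℝ≥0) : ℝ) * (π i A * μ i A)
      ≤ expectedMax μ fun i A => if A ∈ S i then t else 0 := by
  have hsup : ∀ P : ∀ i, T i, (univ.sup fun i => if P i ∈ S i then t else 0)
      = if ∃ i, P i ∈ S i then t else 0 := fun P => by
    split_ifs with h
    · obtain ⟨i, hi⟩ := h
      exact le_antisymm (Finset.sup_le fun j _ => by split_ifs <;> simp)
        (le_sup_of_le (mem_univ i) (by simp [hi]))
    · simp_all
  have hlhs : ∑ i, ∑ A, ((if A ∈ S i then t else 0 : ℝ≥0) : ℝ) * (π i A * μ i A)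
      = t * ∑ i, ∑ A ∈ S i, π i A * μ i A := by
    simp only [apply_ite NNReal.toReal, NNReal.coe_zero, ite_mul, zero_mul, sum_ite_mem,
      univ_inter, mul_sum]
  rw [hlhs, expectedMax]
  simp only [hsup, apply_ite NNReal.toReal, NNReal.coe_zero, mul_ite, mul_zero, ← sum_filter,
    mul_comm _ (t : ℝ)]
  rw [← mul_sum, sum_prod_filter_exists_mem hμ1]
  exact mul_le_mul_of_nonneg_left hS t.2

theorem sum_mul_le_expectedMax (hμ1 : ∀ i, ∑ A, μ i A = 1) {π : ∀ i, T i → ℝ}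
    (hB : ∀ S, BorderIneq μ π S) (y : ∀ i, T i → ℝ≥0) :
    ∑ i, ∑ A, (y i A : ℝ) * (π i A * μ i A) ≤ expectedMax μ y := by
  induction hn : #(univ.filter fun p : Σ i, T i => y p.1 p.2 ≠ 0) using Nat.strong_induction_on
    generalizing y with
  | _ n ih =>
  set supp := univ.filter fun p : Σ i, T i => y p.1 p.2 ≠ 0
  rcases supp.eq_empty_or_nonempty with hempty | hne
  · have hy : ∀ i A, y i A = 0 := fun i A => by
      simpa [supp] using filter_eq_empty_iff.1 hempty (mem_univ ⟨i, A⟩)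
    have hsup : ∀ P : ∀ i, T i, (univ.sup fun i => y i (P i)) = 0 := fun P =>
      sup_eq_zero.2 fun i _ => hy i (P i)
    simp [expectedMax, ↓hsup, hy]
  -- split `y` at its smallest nonzero value `t`: the part below `t` is a multiple of an
  -- indicator, and the part above `t` has smaller support
  obtain ⟨p₀, hp₀, hmin⟩ := exists_min_image supp (fun p => y p.1 p.2) hne
  set t := y p₀.1 p₀.2
  set S : ∀ i, Finset (T i) := fun i => univ.filter fun A => y i A ≠ 0
  have hlow : (fun i A => min (y i A) t) = fun i A => if A ∈ S i then t else 0 := by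
    funext i A
    by_cases h : y i A = 0
    · simp [S, h]
    · simp [S, h, hmin ⟨i, A⟩ (by simp [supp, h])]
  have hhigh : #(univ.filter fun p : Σ i, T i => y p.1 p.2 - t ≠ 0) < n := by
    rw [← hn]
    refine card_lt_card ((ssubset_iff_of_subset fun p hp => ?_).2 ⟨p₀, hp₀, by simp [t]⟩)
    simp only [mem_filter, mem_univ, true_and, supp] at hp ⊢
    exact fun h => hp (by simp [h])
  have hsplit : ∀ i A, (y i A : ℝ) = (min (y i A) t : ℝ≥0) + (y i A - t : ℝ≥0) := fun i A => by
    rw [← NNReal.coe_add, add_comm, tsub_add_min]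
  calc ∑ i, ∑ A, (y i A : ℝ) * (π i A * μ i A)
      = ∑ i, ∑ A, ((if A ∈ S i then t else 0 : ℝ≥0) : ℝ) * (π i A * μ i A)
        + ∑ i, ∑ A, ((y i A - t : ℝ≥0) : ℝ) * (π i A * μ i A) := by
        simp only [← sum_add_distrib, ← add_mul, ← congrFun (congrFun hlow _) _, ← hsplit]
    _ ≤ expectedMax μ (fun i A => if A ∈ S i then t else 0)
        + expectedMax μ (fun i A => y i A - t) :=
        add_le_add (sum_mul_le_expectedMax_ite hμ1 (hB S) t) (ih _ hhigh _ rfl)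
    _ = expectedMax μ y := by rw [expectedMax_eq_add μ y t, hlow]

noncomputable def weightedInterim (μ : ∀ i, T i → ℝ) :
    ((∀ i, T i) → ι → ℝ) →ₗ[ℝ] (∀ i, T i → ℝ) where
  toFun φ i A := μ i A * interimAlloc μ φ i A
  map_add' φ ψ := by
    ext i A
    simp only [interimAlloc, Pi.add_apply, mul_sum, ← sum_add_distrib]
    refine sum_congr rfl fun P _ => ?_
    split_ifs <;> ring
  map_smul' a φ := by
    ext i A
    simp only [interimAlloc, Pi.smul_apply, smul_eq_mul, RingHom.id_apply, mul_sum]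
    refine sum_congr rfl fun P _ => ?_
    split_ifs <;> ring

theorem weightedInterim_apply (φ : (∀ i, T i) → ι → ℝ) (i : ι) (A : T i) :
    weightedInterim μ φ i A = μ i A * interimAlloc μ φ i A :=
  rfl

theorem exists_sum_mul_eq_sup_toNNReal (v : ι → ℝ) :
    ∃ w : ι → ℝ, (∀ i, 0 ≤ w i) ∧ ∑ i, w i ≤ 1 ∧
      ∑ i, v i * w i = (univ.sup fun i => (v i).toNNReal : ℝ≥0) := by
  by_cases h : (univ.sup fun i => (v i).toNNReal) = 0
  · exact ⟨0, fun _ => le_rfl, by simp, by simp [h]⟩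
  have hne : (univ : Finset ι).Nonempty :=
    nonempty_iff_ne_empty.2 fun he => h (by rw [he, sup_empty, bot_eq_zero])
  obtain ⟨i₀, -, hi₀⟩ := exists_mem_eq_sup univ hne fun i => (v i).toNNReal
  have hpos : 0 < v i₀ := Real.toNNReal_pos.1 (pos_iff_ne_zero.2 (hi₀ ▸ h))
  refine ⟨Pi.single i₀ 1, fun i => ?_, by simp, ?_⟩
  · by_cases hi : i = i₀ <;> simp [hi]
  · simp [hi₀, Real.coe_toNNReal _ hpos.le, Pi.single_apply]

theorem exists_isAllocationRule_weightedInterim_eq (hμ0 : ∀ i A, 0 ≤ μ i A)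
    (hμ1 : ∀ i, ∑ A, μ i A = 1) {π : ∀ i, T i → ℝ} (hπ0 : ∀ i A, 0 ≤ π i A)
    (hB : ∀ S, BorderIneq μ π S) :
    ∃ φ, IsAllocationRule φ ∧ weightedInterim μ φ = fun i A => μ i A * π i A := by
  by_contra hq
  obtain ⟨f, u, hfK, hfq⟩ := geometric_hahn_banach_closed_point
    (convex_setOf_isAllocationRule.linear_image (weightedInterim μ))
    (isCompact_setOf_isAllocationRule.image
      (weightedInterim μ).continuous_of_finiteDimensional).isClosed
    fun ⟨φ, hφ, h⟩ => hq ⟨φ, hφ, h⟩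
  set c : ∀ i, T i → ℝ := fun i A => f (Pi.single i (Pi.single A 1))
  have hf : ∀ z, f z = ∑ i, ∑ A, c i A * z i A := fun z => by
    simpa [mul_comm] using f.toLinearMap.apply_eq_sum_sum_single z
  -- the allocation rule that gives the item to a bidder maximizing `c i (P i)`, if positive,
  -- maximizes `f` over the image
  choose w hw0 hw1 hw using fun P : ∀ i, T i => exists_sum_mul_eq_sup_toNNReal fun i => c i (P i)
  have hfw : f (weightedInterim μ w) = expectedMax μ fun i A => (c i A).toNNReal := by
    rw [hf, expectedMax, ← sum_congr rfl fun P _ => congrArg _ (hw P), ← sum_mul_interimAlloc]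
    exact sum_congr rfl fun i _ => sum_congr rfl fun A _ => by rw [weightedInterim_apply]; ring
  have hfq' : f (fun i A => μ i A * π i A)
      ≤ ∑ i, ∑ A, ((c i A).toNNReal : ℝ) * (π i A * μ i A) := by
    rw [hf]
    exact sum_le_sum fun i _ => sum_le_sum fun A _ => by
      rw [mul_comm (π i A)]
      exact mul_le_mul_of_nonneg_right (Real.le_coe_toNNReal _) (mul_nonneg (hμ0 i A) (hπ0 i A))
  linarith [hfK _ ⟨w, ⟨hw0, hw1⟩, rfl⟩, sum_mul_le_expectedMax hμ1 hB fun i A => (c i A).toNNReal]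

theorem sum_ite_prod_erase_eq_one (hμ1 : ∀ i, ∑ A, μ i A = 1) (i : ι) (A : T i) :
    ∑ P : ∀ j, T j, (if P i = A then ∏ j ∈ univ.erase i, μ j (P j) else 0) = 1 := by
  set ν := Function.update μ i fun B => if B = A then 1 else 0
  have hterm : ∀ P : ∀ j, T j,
      (if P i = A then ∏ j ∈ univ.erase i, μ j (P j) else 0) = ∏ j, ν j (P j) := fun P => by
    rw [← mul_prod_erase univ _ (mem_univ i), prod_congr rfl fun j hj =>
      congrFun (Function.update_of_ne (ne_of_mem_erase hj) _ μ) (P j)]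
    simp [ν]
  rw [sum_congr rfl fun P _ => hterm P, ← Fintype.prod_sum]
  refine prod_eq_one fun j _ => ?_
  by_cases hj : j = i
  · subst hj; simp [ν]
  · simp [ν, Function.update_of_ne hj, hμ1 j]

theorem interimAlloc_congr {φ ψ : (∀ i, T i) → ι → ℝ} {i : ι} {A : T i}
    (h : ∀ P : ∀ j, T j, P i = A → (∀ j ≠ i, μ j (P j) ≠ 0) → φ P i = ψ P i) :
    interimAlloc μ φ i A = interimAlloc μ ψ i A := by
  refine sum_congr rfl fun P _ => ?_
  split_ifs with hP
  · by_cases hne : ∀ j ≠ i, μ j (P j) ≠ 0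
    · rw [h P hP hne]
    · push Not at hne
      obtain ⟨j, hji, hj⟩ := hne
      rw [prod_eq_zero (mem_erase.2 ⟨hji, mem_univ j⟩) hj, zero_mul, zero_mul]
  · rfl

theorem interimAlloc_eq_of_forall (hμ1 : ∀ i, ∑ A, μ i A = 1) {φ : (∀ i, T i) → ι → ℝ} {i : ι}
    {A : T i} {a : ℝ} (h : ∀ P : ∀ j, T j, P i = A → (∀ j ≠ i, μ j (P j) ≠ 0) → φ P i = a) :
    interimAlloc μ φ i A = a := by
  rw [interimAlloc_congr (ψ := fun _ _ => a) h, interimAlloc]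
  simp only [← ite_zero_mul, ← sum_mul, sum_ite_prod_erase_eq_one hμ1, one_mul]

theorem isFeasible_of_weightedInterim_eq (hμ1 : ∀ i, ∑ A, μ i A = 1)
    {π : ∀ i, T i → ℝ} (hπ0 : ∀ i A, 0 ≤ π i A) (hπ1 : ∀ i A, π i A ≤ 1)
    {φ₀ : (∀ i, T i) → ι → ℝ} (hφ₀ : IsAllocationRule φ₀)
    (h : weightedInterim μ φ₀ = fun i A => μ i A * π i A) : IsFeasible μ π := by
  -- on profiles of probability zero `φ₀` is unconstrained: there the item goes to the unique
  -- bidder with a null type, if any, with the prescribed probability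
  set φ : (∀ i, T i) → ι → ℝ := fun P i =>
    if ∀ j ≠ i, μ j (P j) ≠ 0 then (if μ i (P i) = 0 then π i (P i) else φ₀ P i) else 0
  refine ⟨φ, ⟨fun P i => ?_, fun P => ?_⟩, fun i A => ?_⟩
  · simp only [φ]
    split_ifs <;> simp [hπ0, hφ₀.1 P i]
  · by_cases hall : ∀ j, μ j (P j) ≠ 0
    · calc ∑ i, φ P i = ∑ i, φ₀ P i := sum_congr rfl fun i _ => by simp [φ, hall]
        _ ≤ 1 := hφ₀.2 P
    · push Not at hall
      obtain ⟨i₀, hi₀⟩ := hall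
      rw [sum_eq_single i₀ (fun i _ hi => if_neg fun hne => hne i₀ (Ne.symm hi) hi₀) (by simp)]
      split_ifs <;> simp [hπ1]
  · have hiA := congrFun (congrFun h i) A
    rw [weightedInterim_apply] at hiA
    by_cases hA : μ i A = 0
    · exact interimAlloc_eq_of_forall hμ1 fun P hP hne => by
        simp only [φ, if_pos hne, hP, if_pos hA]
    · rw [interimAlloc_congr (ψ := φ₀) fun P hP hne => by
        simp only [φ, if_pos hne, hP, if_neg hA]]
      exact mul_left_cancel₀ hA hiA

theorem isFeasible_of_forall_borderIneq (hμ0 : ∀ i A, 0 ≤ μ i A) (hμ1 : ∀ i, ∑ A, μ i A = 1)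
    {π : ∀ i, T i → ℝ} (hπ0 : ∀ i A, 0 ≤ π i A) (hπ1 : ∀ i A, π i A ≤ 1)
    (hB : ∀ S, BorderIneq μ π S) : IsFeasible μ π :=
  let ⟨_, hφ₀, h⟩ := exists_isAllocationRule_weightedInterim_eq hμ0 hμ1 hπ0 hB
  isFeasible_of_weightedInterim_eq hμ1 hπ0 hπ1 hφ₀ h

end Border

open Border

theorem stmt_5_general (m : ℕ) (T : Fin m → Type*)
    [∀ i, Fintype (T i)] [∀ i, DecidableEq (T i)]
    (μ : ∀ i, T i → ℝ) (hμ0 : ∀ i t, 0 ≤ μ i t) (hμ1 : ∀ i, ∑ t, μ i t = 1)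
    (π : ∀ i, T i → ℝ) (hπ0 : ∀ i t, 0 ≤ π i t) (hπ1 : ∀ i t, π i t ≤ 1) :
    (∃ φ : (∀ i, T i) → Fin m → ℝ,
        (∀ P i, 0 ≤ φ P i) ∧ (∀ P, ∑ i, φ P i ≤ 1) ∧
        (∀ (i : Fin m) (A : T i),
          (∑ P : ∀ j, T j,
            if P i = A then (∏ j ∈ Finset.univ.erase i, μ j (P j)) * φ P i else 0)
          = π i A)) ↔
    (∀ x : ℝ, 0 ≤ x →
      ∑ i, ∑ A ∈ Finset.univ.filter (fun A : T i =>
          x < (∑ B ∈ Finset.univ.filter (fun B : T i => π i B ≤ π i A), μ i B) * π i A),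
        π i A * μ i A
      ≤ 1 - ∏ i, (1 - ∑ A ∈ Finset.univ.filter (fun A : T i =>
          x < (∑ B ∈ Finset.univ.filter (fun B : T i => π i B ≤ π i A), μ i B) * π i A),
            μ i A)) := by
  constructor
  · rintro ⟨φ, hφ0, hφ1, hφ⟩ x -
    exact IsFeasible.borderIneq hμ0 hμ1 ⟨φ, ⟨hφ0, hφ1⟩, hφ⟩ (virtualThresholdSet μ π x)
  · intro hv
    obtain ⟨φ, ⟨hφ0, hφ1⟩, hφ⟩ := isFeasible_of_forall_borderIneq hμ0 hμ1 hπ0 hπ1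
      (borderIneq_of_forall_virtualThresholdSet hμ0 hμ1 hπ0 hv)
    exact ⟨φ, hφ0, hφ1, hφ⟩

/-- Virtual-threshold form of Border's theorem for independent bidders (single item):
defining the virtual reduced form `π̂_i(A) = Pr[π_i(t_i) ≤ π_i(A)]·π_i(A)`, a reduced
form `π` is feasible if and only if for every `x ≥ 0`, the virtual-threshold sets
`S^{(i)}_x = {A ∈ T_i : π̂_i(A) > x}` satisfy
`Σ_i Σ_{A ∈ S^{(i)}_x} π_i(A)·Pr[t_i = A] ≤ 1 − Π_i (1 − Pr[t_i ∈ S^{(i)}_x])`. -/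
theorem stmt_5 (m : ℕ) (hm : 0 < m) (T : Fin m → Type*)
    [∀ i, Fintype (T i)] [∀ i, DecidableEq (T i)]
    (μ : ∀ i, T i → ℝ) (hμ0 : ∀ i t, 0 ≤ μ i t) (hμ1 : ∀ i, ∑ t, μ i t = 1)
    (π : ∀ i, T i → ℝ) (hπ0 : ∀ i t, 0 ≤ π i t) (hπ1 : ∀ i t, π i t ≤ 1) :
    (∃ φ : (∀ i, T i) → Fin m → ℝ,
        (∀ P i, 0 ≤ φ P i) ∧ (∀ P, ∑ i, φ P i ≤ 1) ∧
        (∀ (i : Fin m) (A : T i),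
          (∑ P : ∀ j, T j,
            if P i = A then (∏ j ∈ Finset.univ.erase i, μ j (P j)) * φ P i else 0)
          = π i A)) ↔
    (∀ x : ℝ, 0 ≤ x →
      ∑ i, ∑ A ∈ Finset.univ.filter (fun A : T i =>
          x < (∑ B ∈ Finset.univ.filter (fun B : T i => π i B ≤ π i A), μ i B) * π i A),
        π i A * μ i A
      ≤ 1 - ∏ i, (1 - ∑ A ∈ Finset.univ.filter (fun A : T i =>
          x < (∑ B ∈ Finset.univ.filter (fun B : T i => π i B ≤ π i A), μ i B) * π i A),
            μ i A)) :=
  stmt_5_general m T μ hμ0 hμ1 π hπ0 hπ1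
end

section
/- Let F ⊆ [0,1]^{m×n} be defined by non-negative linear inequalities: φ ∈ F iff c(h)·φ ≤ d(h) for all h in a finite set H (all coefficients c_{ij}(h) ≥ 0, d(h) ≥ 0) and φ ≥ 0. Then for any (possibly correlated) joint type distribution D over finite type spaces, a reduced form π is feasible with respect to F if and only if for all weights W ∈ [0,1]^{n × Σ_i|T_i|}: Σ_{i,j} Σ_{A∈T_i} W_{ij}(A)·π_{ij}(A)·Pr[t_i = A] ≤ Σ_P Pr[P] · max_{φ(P)∈F} Σ_{i,j} W_{ij}(P_i)·φ_{ij}(P). -/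
/-!
`π` is feasible iff `y = (π_{ij}(A) Pr[t_i = A])` lies in the image `S` of `Fᴾ` under the linear
map `Φ ↦ (Σ_P 1[P_i = A] Pr[P] Φ_{ij}(P))_{i,A,j}`.  `S` is compact and convex, so `y ∈ S` iff
`f y ≤ max_S f` for every linear functional `f`.  Writing `f` through weights `W`,
`max_S f = Σ_P Pr[P] max_F ⟪W(P), ·⟫` since `φ(P)` can be chosen separately for each `P`.
Because `F` is a down-closed subset of the non-negative orthant, replacing `W` by its positive
part can only increase `⟪W, y⟫` (as `y ≥ 0`) without changing `max_F`, and both sides are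
positively homogeneous in `W`; so it suffices to test weights in `[0,1]`.
-/

open Finset Set

def packingPolytope {M N ι : Type*} [Fintype M] [Fintype N] (c : ι → M → N → ℝ) (d : ι → ℝ) :
    Set (M → N → ℝ) :=
  {φ | 0 ≤ φ ∧ ∀ h, ∑ i, ∑ j, c h i j * φ i j ≤ d h}

section packingPolytope

variable {M N ι : Type*} [Fintype M] [Fintype N] {c : ι → M → N → ℝ} {d : ι → ℝ}

theorem convex_packingPolytope : Convex ℝ (packingPolytope c d) := by
  intro φ hφ ψ hψ a b ha hb hab
  refine ⟨add_nonneg (smul_nonneg ha hφ.1) (smul_nonneg hb hψ.1), fun h => ?_⟩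
  calc ∑ i, ∑ j, c h i j * (a • φ + b • ψ) i j
      = a * ∑ i, ∑ j, c h i j * φ i j + b * ∑ i, ∑ j, c h i j * ψ i j := by
        simp only [Pi.add_apply, Pi.smul_apply, smul_eq_mul, mul_add, sum_add_distrib, mul_sum,
          mul_left_comm]
    _ ≤ a * d h + b * d h := by gcongr <;> [exact hφ.2 h; exact hψ.2 h]
    _ = d h := by rw [← add_mul, hab, one_mul]

theorem isClosed_packingPolytope : IsClosed (packingPolytope c d) := by
  simp only [packingPolytope, ofPred_and, ofPred_forall]
  exact (isClosed_le continuous_const continuous_id).inter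
    (isClosed_iInter fun h => isClosed_le (by fun_prop) continuous_const)

theorem isCompact_packingPolytope (hle : ∀ φ ∈ packingPolytope c d, φ ≤ 1) :
    IsCompact (packingPolytope c d) :=
  isCompact_Icc.of_isClosed_subset isClosed_packingPolytope fun φ hφ => ⟨hφ.1, hle φ hφ⟩

theorem zero_mem_packingPolytope (hd : ∀ h, 0 ≤ d h) : 0 ∈ packingPolytope c d :=
  ⟨le_rfl, fun h => by simpa using hd h⟩

theorem mem_packingPolytope_of_le (hc : ∀ h i j, 0 ≤ c h i j) {φ ψ : M → N → ℝ}
    (hφ : φ ∈ packingPolytope c d) (hψ : 0 ≤ ψ) (hψφ : ψ ≤ φ) : ψ ∈ packingPolytope c d :=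
  ⟨hψ, fun h => le_trans (by gcongr with i _ j _; exacts [hc h i j, hψφ i j]) (hφ.2 h)⟩

end packingPolytope

noncomputable def supportFun {M N : Type*} [Fintype M] [Fintype N] (F : Set (M → N → ℝ))
    (w : M → N → ℝ) : ℝ :=
  sSup ((fun φ => ∑ i, ∑ j, w i j * φ i j) '' F)

section supportFun

variable {M N : Type*} [Fintype M] [Fintype N] {F : Set (M → N → ℝ)}

theorem le_supportFun (hF : IsCompact F) (w : M → N → ℝ) {φ : M → N → ℝ} (hφ : φ ∈ F) :
    ∑ i, ∑ j, w i j * φ i j ≤ supportFun F w :=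
  le_csSup (hF.image (by fun_prop)).bddAbove (mem_image_of_mem _ hφ)

theorem exists_eq_supportFun (hF : IsCompact F) (hne : F.Nonempty) (w : M → N → ℝ) :
    ∃ φ ∈ F, ∑ i, ∑ j, w i j * φ i j = supportFun F w :=
  (hF.image (by fun_prop)).sSup_mem (hne.image _)

theorem supportFun_smul (hF : IsCompact F) (hne : F.Nonempty) {t : ℝ} (ht : 0 ≤ t)
    (w : M → N → ℝ) : supportFun F (t • w) = t * supportFun F w := by
  obtain ⟨φ, hφ, hφw⟩ := exists_eq_supportFun hF hne w
  obtain ⟨ψ, hψ, hψw⟩ := exists_eq_supportFun hF hne (t • w)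
  refine le_antisymm ?_ ?_
  · calc supportFun F (t • w) = t * ∑ i, ∑ j, w i j * ψ i j := by
          simp only [← hψw, Pi.smul_apply, smul_eq_mul, mul_sum, mul_assoc]
      _ ≤ t * supportFun F w := by gcongr; exact le_supportFun hF w hψ
  · calc t * supportFun F w = ∑ i, ∑ j, (t • w) i j * φ i j := by
          simp only [← hφw, Pi.smul_apply, smul_eq_mul, mul_sum, mul_assoc]
      _ ≤ supportFun F (t • w) := le_supportFun hF _ hφ

theorem supportFun_max_zero_le (hF : IsCompact F) (hne : F.Nonempty) (hnn : ∀ φ ∈ F, 0 ≤ φ)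
    (hdown : ∀ φ ∈ F, ∀ ψ, 0 ≤ ψ → ψ ≤ φ → ψ ∈ F) (w : M → N → ℝ) :
    supportFun F (fun i j => max (w i j) 0) ≤ supportFun F w := by
  obtain ⟨φ, hφ, hφw⟩ := exists_eq_supportFun hF hne fun i j => max (w i j) 0
  have hφ0 : ∀ i j, 0 ≤ φ i j := hnn φ hφ
  let ψ : M → N → ℝ := fun i j => if w i j < 0 then 0 else φ i j
  have hψ : ψ ∈ F := hdown φ hφ ψ
    (fun i j => by dsimp only [ψ]; split_ifs <;> simp [hφ0 i j])
    (fun i j => by dsimp only [ψ]; split_ifs <;> simp [hφ0 i j])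
  calc supportFun F (fun i j => max (w i j) 0) = ∑ i, ∑ j, w i j * ψ i j := by
        rw [← hφw]
        refine sum_congr rfl fun i _ => sum_congr rfl fun j _ => ?_
        by_cases hw : w i j < 0
        · simp [ψ, hw, max_eq_right hw.le]
        · simp [ψ, hw, max_eq_left (not_lt.mp hw)]
    _ ≤ supportFun F w := le_supportFun hF w hψ

end supportFun

section basis

variable {M N : Type*} [Fintype M] [DecidableEq M] [Fintype N] [DecidableEq N] {T : M → Type*}
  [∀ i, Fintype (T i)] [∀ i, DecidableEq (T i)]

theorem sum_smul_single_eq (x : ∀ i, T i → N → ℝ) :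
    ∑ i, ∑ j, ∑ A, x i A j • Pi.single i (Pi.single A (Pi.single j 1)) = x := by
  ext i A j
  rw [Finset.sum_apply, sum_eq_single i (fun i' _ hi' => by simp [Pi.single_eq_of_ne hi'.symm])
    (by simp)]
  simp [Finset.sum_apply, Pi.single_apply]

theorem LinearMap.apply_eq_sum_apply_single_mul (f : (∀ i, T i → N → ℝ) →ₗ[ℝ] ℝ)
    (x : ∀ i, T i → N → ℝ) :
    f x = ∑ i, ∑ j, ∑ A, f (Pi.single i (Pi.single A (Pi.single j 1))) * x i A j := by
  conv_lhs => rw [← sum_smul_single_eq x]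
  simp only [map_sum, map_smul, smul_eq_mul, mul_comm]

end basis

section interim

variable {M N : Type*} [Fintype M] [DecidableEq M] {T : M → Type*} [∀ i, Fintype (T i)]
  [∀ i, DecidableEq (T i)]

/-- For a mechanism `Φ` with reduced form `π`, `interimAlloc D Φ i A j = π_{ij}(A) Pr[t_i = A]`. -/
def interimAlloc (D : (∀ i, T i) → ℝ) :
    ((∀ i, T i) → M → N → ℝ) →ₗ[ℝ] ∀ i, T i → N → ℝ where
  toFun Φ i A j := ∑ P, if P i = A then D P * Φ P i j else 0
  map_add' Φ Ψ := by
    ext i A j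
    simp only [Pi.add_apply, mul_add, ← sum_add_distrib, ite_add_ite, add_zero]
  map_smul' t Φ := by
    ext i A j
    simp only [Pi.smul_apply, smul_eq_mul, RingHom.id_apply, mul_sum, mul_ite, mul_zero,
      mul_left_comm]

theorem interimAlloc_apply (D : (∀ i, T i) → ℝ) (Φ : (∀ i, T i) → M → N → ℝ) (i : M) (A : T i)
    (j : N) : interimAlloc D Φ i A j = ∑ P, if P i = A then D P * Φ P i j else 0 :=
  rfl

theorem sum_mul_interimAlloc [Fintype N] (D : (∀ i, T i) → ℝ) (W : ∀ i, T i → N → ℝ)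
    (Φ : (∀ i, T i) → M → N → ℝ) :
    ∑ i, ∑ j, ∑ A, W i A j * interimAlloc D Φ i A j
      = ∑ P, D P * ∑ i, ∑ j, W i (P i) j * Φ P i j := by
  have inner : ∀ i j, ∑ A, W i A j * interimAlloc D Φ i A j
      = ∑ P, D P * (W i (P i) j * Φ P i j) := fun i j => by
    simp only [interimAlloc_apply, mul_sum, mul_ite, mul_zero]
    rw [sum_comm]
    simp only [sum_ite_eq, Finset.mem_univ, if_true, mul_left_comm]
  simp only [inner, mul_sum]
  exact (sum_congr rfl fun i _ => sum_comm).trans sum_comm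

end interim

section border

variable {M N : Type*} [Fintype M] [DecidableEq M] [Fintype N] {T : M → Type*}
  [∀ i, Fintype (T i)] {D : (∀ i, T i) → ℝ} {F : Set (M → N → ℝ)}

theorem sum_mul_le_of_forall_le_one (hF : IsCompact F) (hne : F.Nonempty)
    {y : ∀ i, T i → N → ℝ}
    (h : ∀ W : ∀ i, T i → N → ℝ, (∀ i A j, 0 ≤ W i A j ∧ W i A j ≤ 1) →
      ∑ i, ∑ j, ∑ A, W i A j * y i A j ≤ ∑ P, D P * supportFun F (fun i j => W i (P i) j))
    {W : ∀ i, T i → N → ℝ} (hW : 0 ≤ W) :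
    ∑ i, ∑ j, ∑ A, W i A j * y i A j ≤ ∑ P, D P * supportFun F (fun i j => W i (P i) j) := by
  set t : ℝ := ‖W‖ + 1
  have ht : 0 < t := by positivity
  have hWt : ∀ i A j, W i A j ≤ t := fun i A j =>
    calc W i A j ≤ ‖W i A j‖ := Real.le_norm_self _
      _ ≤ ‖W‖ := ((norm_le_pi_norm (W i A) j).trans (norm_le_pi_norm (W i) A)).trans
          (norm_le_pi_norm W i)
      _ ≤ t := by linarith
  have hscaled := h (t⁻¹ • W) fun i A j =>
    ⟨by simpa using mul_nonneg (inv_nonneg.2 ht.le) (hW i A j),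
      by simpa [inv_mul_le_iff₀ ht] using hWt i A j⟩
  have hsmul : ∀ P : ∀ i, T i,
      (fun i j => (t⁻¹ • W) i (P i) j) = t⁻¹ • fun i j => W i (P i) j := fun _ => rfl
  refine le_of_mul_le_mul_left ?_ (inv_pos.2 ht)
  calc t⁻¹ * ∑ i, ∑ j, ∑ A, W i A j * y i A j
      = ∑ i, ∑ j, ∑ A, (t⁻¹ • W) i A j * y i A j := by
        simp only [mul_sum, Pi.smul_apply, smul_eq_mul, mul_assoc]
    _ ≤ ∑ P, D P * supportFun F (fun i j => (t⁻¹ • W) i (P i) j) := hscaled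
    _ = t⁻¹ * ∑ P, D P * supportFun F (fun i j => W i (P i) j) := by
        simp only [hsmul, supportFun_smul hF hne (inv_nonneg.2 ht.le), mul_sum, mul_left_comm]

variable [∀ i, DecidableEq (T i)]

theorem sum_mul_interimAlloc_le (hF : IsCompact F) (hD : ∀ P, 0 ≤ D P)
    {Φ : (∀ i, T i) → M → N → ℝ} (hΦ : ∀ P, Φ P ∈ F) (W : ∀ i, T i → N → ℝ) :
    ∑ i, ∑ j, ∑ A, W i A j * interimAlloc D Φ i A j
      ≤ ∑ P, D P * supportFun F (fun i j => W i (P i) j) := by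
  rw [sum_mul_interimAlloc]
  gcongr with P
  exacts [hD P, le_supportFun hF _ (hΦ P)]

theorem mem_image_interimAlloc_of_forall_sum_mul_le (hF : IsCompact F) (hconv : Convex ℝ F)
    (hne : F.Nonempty) (hnn : ∀ φ ∈ F, 0 ≤ φ) (hdown : ∀ φ ∈ F, ∀ ψ, 0 ≤ ψ → ψ ≤ φ → ψ ∈ F)
    (hD : ∀ P, 0 ≤ D P) {y : ∀ i, T i → N → ℝ} (hy : 0 ≤ y)
    (h : ∀ W : ∀ i, T i → N → ℝ, 0 ≤ W →
      ∑ i, ∑ j, ∑ A, W i A j * y i A j ≤ ∑ P, D P * supportFun F (fun i j => W i (P i) j)) :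
    y ∈ interimAlloc D '' univ.pi fun _ => F := by
  classical
  have hS_conv : Convex ℝ (interimAlloc D '' univ.pi fun _ => F) :=
    (convex_pi fun _ _ => hconv).linear_image _
  have hS_closed : IsClosed (interimAlloc D '' univ.pi fun _ => F) :=
    ((isCompact_univ_pi fun _ => hF).image
      (interimAlloc D).continuous_of_finiteDimensional).isClosed
  rw [← iInter_halfSpaces_eq hS_conv hS_closed, mem_iInter]
  intro f
  set W : ∀ i, T i → N → ℝ := fun i A j => f (Pi.single i (Pi.single A (Pi.single j 1)))
  have hf : ∀ x, f x = ∑ i, ∑ j, ∑ A, W i A j * x i A j :=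
    (f : (∀ i, T i → N → ℝ) →ₗ[ℝ] ℝ).apply_eq_sum_apply_single_mul
  choose Φ hΦF hΦ using fun P : ∀ i, T i => exists_eq_supportFun hF hne fun i j => W i (P i) j
  refine ⟨interimAlloc D Φ, mem_image_of_mem _ fun P _ => hΦF P, ?_⟩
  calc f y = ∑ i, ∑ j, ∑ A, W i A j * y i A j := hf y
    _ ≤ ∑ i, ∑ j, ∑ A, max (W i A j) 0 * y i A j := by
        gcongr with i _ j _ A _
        exacts [hy i A j, le_max_left _ _]
    _ ≤ ∑ P, D P * supportFun F (fun i j => max (W i (P i) j) 0) :=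
        h _ fun i A j => le_max_right _ _
    _ ≤ ∑ P, D P * supportFun F (fun i j => W i (P i) j) := by
        gcongr with P
        exacts [hD P, supportFun_max_zero_le hF hne hnn hdown _]
    _ = f (interimAlloc D Φ) := by
        rw [hf, sum_mul_interimAlloc]
        simp only [hΦ]

end border

theorem stmt_12_general (m n : ℕ) (T : Fin m → Type*)
    [∀ i, Fintype (T i)] [∀ i, DecidableEq (T i)]
    (D : (∀ i, T i) → ℝ) (hD0 : ∀ P, 0 ≤ D P)
    (ι : Type*) [Fintype ι]
    (c : ι → Fin m → Fin n → ℝ) (d : ι → ℝ)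
    (hc : ∀ h i j, 0 ≤ c h i j) (hd : ∀ h, 0 ≤ d h)
    (F : Set (Fin m → Fin n → ℝ))
    (hF : ∀ φ, φ ∈ F ↔ ((∀ i j, 0 ≤ φ i j) ∧ ∀ h, ∑ i, ∑ j, c h i j * φ i j ≤ d h))
    (hFbdd : ∀ φ ∈ F, ∀ i j, φ i j ≤ 1)
    (π : ∀ i, T i → Fin n → ℝ)
    (hπ : ∀ i A j, 0 ≤ π i A j ∧ π i A j ≤ 1) :
    (∃ Φ : (∀ i, T i) → Fin m → Fin n → ℝ,
        (∀ P, Φ P ∈ F) ∧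
        (∀ (i : Fin m) (A : T i) (j : Fin n),
          (∑ P : ∀ i', T i', if P i = A then D P * Φ P i j else 0)
            = π i A j * ∑ P : ∀ i', T i', if P i = A then D P else 0)) ↔
    (∀ W : ∀ i : Fin m, T i → Fin n → ℝ,
      (∀ i A j, 0 ≤ W i A j ∧ W i A j ≤ 1) →
      ∑ i, ∑ j, ∑ A : T i,
          W i A j * π i A j * (∑ P : ∀ i', T i', if P i = A then D P else 0)
        ≤ ∑ P : ∀ i', T i',
            D P * sSup ((fun φ => ∑ i, ∑ j, W i (P i) j * φ i j) '' F)) := by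
  obtain rfl : F = packingPolytope c d := Set.ext hF
  have hcomp : IsCompact (packingPolytope c d) := isCompact_packingPolytope hFbdd
  have hne : (packingPolytope c d).Nonempty := ⟨0, zero_mem_packingPolytope hd⟩
  constructor
  · rintro ⟨Φ, hΦF, hΦ⟩ W -
    simp only [mul_assoc, ← hΦ]
    exact sum_mul_interimAlloc_le hcomp hD0 hΦF W
  · intro h
    have hy : 0 ≤ fun i A j => π i A j * ∑ P : ∀ i', T i', if P i = A then D P else 0 :=
      fun i A j => mul_nonneg (hπ i A j).1 (sum_nonneg fun P _ => by split_ifs <;> simp [hD0 P])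
    obtain ⟨Φ, hΦF, hΦ⟩ := mem_image_interimAlloc_of_forall_sum_mul_le hcomp
      convex_packingPolytope hne (fun φ hφ => hφ.1)
      (fun φ hφ ψ => mem_packingPolytope_of_le hc hφ) hD0 hy fun W hW =>
        sum_mul_le_of_forall_le_one hcomp hne (by simpa only [mul_assoc, supportFun] using h) hW
    exact ⟨Φ, fun P => hΦF P trivial, fun i A j => congr_fun₃ hΦ i A j⟩

/-- The weighted generalization of Border's theorem for feasibility sets with
non-negative linear feasibility constraints.  `F ⊆ [0,1]^{m×n}` is defined by the
non-negative inequalities `c(h)·φ ≤ d(h)` (`h ∈ ι`) and `φ ≥ 0`.  For any, possibly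
correlated, joint type distribution `D` over finite type spaces, a reduced form `π` is
feasible w.r.t. `F` iff for all weights `W ∈ [0,1]^{n × Σ_i|T_i|}`:
`Σ_{i,j} Σ_{A∈T_i} W_{ij}(A)·π_{ij}(A)·Pr[t_i = A]
  ≤ Σ_P Pr[P] · max_{φ ∈ F} Σ_{i,j} W_{ij}(P_i)·φ_{ij}`. -/
theorem stmt_12 (m n : ℕ) (T : Fin m → Type*)
    [∀ i, Fintype (T i)] [∀ i, DecidableEq (T i)]
    (D : (∀ i, T i) → ℝ) (hD0 : ∀ P, 0 ≤ D P) (hD1 : ∑ P, D P = 1)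
    (ι : Type*) [Fintype ι]
    (c : ι → Fin m → Fin n → ℝ) (d : ι → ℝ)
    (hc : ∀ h i j, 0 ≤ c h i j) (hd : ∀ h, 0 ≤ d h)
    (F : Set (Fin m → Fin n → ℝ))
    (hF : ∀ φ, φ ∈ F ↔ ((∀ i j, 0 ≤ φ i j) ∧ ∀ h, ∑ i, ∑ j, c h i j * φ i j ≤ d h))
    (hFbdd : ∀ φ ∈ F, ∀ i j, φ i j ≤ 1)
    (π : ∀ i, T i → Fin n → ℝ)
    (hπ : ∀ i A j, 0 ≤ π i A j ∧ π i A j ≤ 1) :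
    (∃ Φ : (∀ i, T i) → Fin m → Fin n → ℝ,
        (∀ P, Φ P ∈ F) ∧
        (∀ (i : Fin m) (A : T i) (j : Fin n),
          (∑ P : ∀ i', T i', if P i = A then D P * Φ P i j else 0)
            = π i A j * ∑ P : ∀ i', T i', if P i = A then D P else 0)) ↔
    (∀ W : ∀ i : Fin m, T i → Fin n → ℝ,
      (∀ i A j, 0 ≤ W i A j ∧ W i A j ≤ 1) →
      ∑ i, ∑ j, ∑ A : T i,
          W i A j * π i A j * (∑ P : ∀ i', T i', if P i = A then D P else 0)
        ≤ ∑ P : ∀ i', T i',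
            D P * sSup ((fun φ => ∑ i, ∑ j, W i (P i) j * φ i j) '' F)) :=
  stmt_12_general m n T D hD0 ι c d hc hd F hF hFbdd π hπ
end
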